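/- arXiv:1610.01970 — 2 statements merged into one kernel-verified Lean document; each statement's English description precedes it below -/
import Mathlib

section
/- Let p, q be probability distributions on a space Z, let ℓ : X × Z → ℝ be a loss function, and define f(x) = E_{z∼p}[ℓ(x,z)] and g(x) = E_{z∼q}[ℓ(x,z)]. Suppose f and g are m-strongly convex on X with minimizers x_f*, x_g*, and suppose for every x ∈ X, |E_{z∼p}[ℓ(x,z)] - E_{z∼q}[ℓ(x,z)]| ≤ ρ̃. Then ‖x_f* - x_g*‖ ≤ √((2/m)·ρ̃). -/
/-!
The first-order strong convexity inequality gives strong convexity in the usual form, and a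
strongly convex function grows at least quadratically away from a minimizer over a convex set:
`f x* + m/2 ‖y - x*‖² ≤ f y`. Adding this growth bound for `f` at `x_f*` (evaluated at `x_g*`) and
for `g` at `x_g*` (evaluated at `x_f*`) gives `m ‖x_f* - x_g*‖² ≤ (f - g)(x_g*) + (g - f)(x_f*) ≤ 2ρ̃`.
-/

open scoped RealInnerProductSpace Topology
open MeasureTheory Filter

section

variable {E : Type*} [NormedAddCommGroup E] [InnerProductSpace ℝ E] {s : Set E} {m ρ : ℝ}
  {f g : E → ℝ}

lemma strongConvexOn_of_add_inner_le {f' : E → E} (hs : Convex ℝ s)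
    (hf : ∀ x ∈ s, ∀ y ∈ s, f x + ⟪f' x, y - x⟫ + m / 2 * ‖y - x‖ ^ 2 ≤ f y) :
    StrongConvexOn s m f := by
  refine ⟨hs, fun x hx y hy a b ha hb hab ↦ ?_⟩
  obtain rfl : a = 1 - b := eq_sub_of_add_eq hab
  set c := (1 - b) • x + b • y
  have hc : c ∈ s := hs hx hy ha hb hab
  have hxc : x - c = b • (x - y) := by module
  have hyc : y - c = (-(1 - b)) • (x - y) := by module
  have h₁ := hf c hc x hx
  have h₂ := hf c hc y hy
  rw [hxc, inner_smul_right, norm_smul, Real.norm_of_nonneg hb] at h₁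
  rw [hyc, inner_smul_right, norm_smul, norm_neg, Real.norm_of_nonneg ha] at h₂
  show f c ≤ (1 - b) * f x + b * f y - (1 - b) * b * (m / 2 * ‖x - y‖ ^ 2)
  nlinarith [mul_le_mul_of_nonneg_left h₁ ha, mul_le_mul_of_nonneg_left h₂ hb]

lemma StrongConvexOn.add_sq_norm_sub_le_of_isMinOn {a b : E} (hf : StrongConvexOn s m f)
    (hmin : IsMinOn f s a) (ha : a ∈ s) (hb : b ∈ s) :
    f a + m / 2 * ‖b - a‖ ^ 2 ≤ f b := by
  set K := m / 2 * ‖b - a‖ ^ 2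
  -- Compare `f a` with `f` at the point `(1 - t) • a + t • b` of the segment, then let `t → 0⁺`.
  have hsegment : ∀ t ∈ Set.Ioc (0 : ℝ) 1, f a + (1 - t) * K ≤ f b := by
    rintro t ⟨ht₀, ht₁⟩
    have hconv : f ((1 - t) • a + t • b) ≤ (1 - t) * f a + t * f b - (1 - t) * t * K := by
      simpa only [smul_eq_mul, norm_sub_rev a b] using
        hf.2 ha hb (sub_nonneg.2 ht₁) ht₀.le (sub_add_cancel 1 t)
    have hle : f a ≤ f ((1 - t) • a + t • b) :=
      hmin (hf.1 ha hb (sub_nonneg.2 ht₁) ht₀.le (sub_add_cancel 1 t))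
    have : t * (f a + (1 - t) * K) ≤ t * f b := by linarith
    exact le_of_mul_le_mul_left this ht₀
  have hlim : Tendsto (fun t : ℝ ↦ f a + (1 - t) * K) (𝓝[>] 0) (𝓝 (f a + K)) := by
    have : Continuous fun t : ℝ ↦ f a + (1 - t) * K := by fun_prop
    simpa using (this.tendsto 0).mono_left nhdsWithin_le_nhds
  refine le_of_tendsto hlim ?_
  filter_upwards [Ioc_mem_nhdsGT (zero_lt_one' ℝ)] with t ht
  exact hsegment t ht

lemma StrongConvexOn.norm_sub_le_sqrt_of_isMinOn {a b : E} (hm : 0 < m)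
    (hf : StrongConvexOn s m f) (hg : StrongConvexOn s m g)
    (hfa : IsMinOn f s a) (hgb : IsMinOn g s b) (ha : a ∈ s) (hb : b ∈ s)
    (hfg : ∀ x ∈ s, |f x - g x| ≤ ρ) :
    ‖a - b‖ ≤ √(2 / m * ρ) := by
  have hgrowth_f := hf.add_sq_norm_sub_le_of_isMinOn hfa ha hb
  have hgrowth_g := hg.add_sq_norm_sub_le_of_isMinOn hgb hb ha
  have hρa := (abs_le.1 (hfg a ha)).1
  have hρb := (abs_le.1 (hfg b hb)).2
  rw [norm_sub_rev] at hgrowth_f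
  refine Real.le_sqrt_of_sq_le ?_
  rw [div_mul_eq_mul_div, le_div_iff₀ hm]
  linarith

end

theorem stmt3_general {d : ℕ} {Z : Type*} [MeasurableSpace Z]
    (p q : Measure Z)
    (X : Set (EuclideanSpace ℝ (Fin d)))
    (hXconv : Convex ℝ X)
    (ℓ : EuclideanSpace ℝ (Fin d) → Z → ℝ)
    (f g : EuclideanSpace ℝ (Fin d) → ℝ)
    (hfdef : ∀ x, f x = ∫ z, ℓ x z ∂p)
    (hgdef : ∀ x, g x = ∫ z, ℓ x z ∂q)
    (f' g' : EuclideanSpace ℝ (Fin d) → EuclideanSpace ℝ (Fin d))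
    (m : ℝ) (hm : 0 < m)
    (hscf : ∀ x ∈ X, ∀ y ∈ X,
      f x + ⟪f' x, y - x⟫ + m / 2 * ‖y - x‖ ^ 2 ≤ f y)
    (hscg : ∀ x ∈ X, ∀ y ∈ X,
      g x + ⟪g' x, y - x⟫ + m / 2 * ‖y - x‖ ^ 2 ≤ g y)
    (xf xg : EuclideanSpace ℝ (Fin d)) (hxf : xf ∈ X) (hxg : xg ∈ X)
    (hminf : ∀ x ∈ X, f xf ≤ f x) (hming : ∀ x ∈ X, g xg ≤ g x)
    (ρ : ℝ)
    (hipm : ∀ x ∈ X, |(∫ z, ℓ x z ∂p) - ∫ z, ℓ x z ∂q| ≤ ρ) :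
    ‖xf - xg‖ ≤ Real.sqrt (2 / m * ρ) := by
  have hfg : ∀ x ∈ X, |f x - g x| ≤ ρ := fun x hx ↦ by
    simpa only [hfdef, hgdef] using hipm x hx
  exact (strongConvexOn_of_add_inner_le hXconv hscf).norm_sub_le_sqrt_of_isMinOn hm
    (strongConvexOn_of_add_inner_le hXconv hscg) (isMinOn_iff.2 hminf) (isMinOn_iff.2 hming)
    hxf hxg hfg

/-- If `f x = E_{z∼p}[ℓ x z]`, `g x = E_{z∼q}[ℓ x z]` are `m`-strongly convex on `X` with
minimizers `xf, xg`, and `|E_p ℓ(x,·) - E_q ℓ(x,·)| ≤ ρ̃` for all `x ∈ X`, then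
`‖xf - xg‖ ≤ √((2/m)·ρ̃)`. -/
theorem stmt3 {d : ℕ} {Z : Type*} [MeasurableSpace Z]
    (p q : Measure Z) [IsProbabilityMeasure p] [IsProbabilityMeasure q]
    (X : Set (EuclideanSpace ℝ (Fin d)))
    (hX : X.Nonempty) (hXc : IsClosed X) (hXconv : Convex ℝ X)
    (ℓ : EuclideanSpace ℝ (Fin d) → Z → ℝ)
    (f g : EuclideanSpace ℝ (Fin d) → ℝ)
    (hfdef : ∀ x, f x = ∫ z, ℓ x z ∂p)
    (hgdef : ∀ x, g x = ∫ z, ℓ x z ∂q)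
    (f' g' : EuclideanSpace ℝ (Fin d) → EuclideanSpace ℝ (Fin d))
    (hgradf : ∀ x ∈ X, HasGradientAt f (f' x) x)
    (hgradg : ∀ x ∈ X, HasGradientAt g (g' x) x)
    (m : ℝ) (hm : 0 < m)
    (hscf : ∀ x ∈ X, ∀ y ∈ X,
      f x + ⟪f' x, y - x⟫ + m / 2 * ‖y - x‖ ^ 2 ≤ f y)
    (hscg : ∀ x ∈ X, ∀ y ∈ X,
      g x + ⟪g' x, y - x⟫ + m / 2 * ‖y - x‖ ^ 2 ≤ g y)
    (xf xg : EuclideanSpace ℝ (Fin d)) (hxf : xf ∈ X) (hxg : xg ∈ X)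
    (hminf : ∀ x ∈ X, f xf ≤ f x) (hming : ∀ x ∈ X, g xg ≤ g x)
    (ρ : ℝ)
    (hipm : ∀ x ∈ X, |(∫ z, ℓ x z ∂p) - ∫ z, ℓ x z ∂q| ≤ ρ) :
    ‖xf - xg‖ ≤ Real.sqrt (2 / m * ρ) :=
  stmt3_general p q X hXconv ℓ f g hfdef hgdef f' g' m hm hscf hscg xf xg hxf hxg hminf hming ρ hipm
end

section
/- Let V be a random variable and 𝔽 a sigma-algebra with a ≤ V ≤ b almost surely and E[V | 𝔽] = 0 almost surely. Then for every s ∈ ℝ, E[exp(sV) | 𝔽] ≤ exp((1/8)(b-a)²s²) almost surely. -/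
open MeasureTheory

open Real in
/-- Key analytic inequality behind Hoeffding's lemma. -/
lemma hoeffding_aux {p : ℝ} (hp0 : 0 ≤ p) (hp1 : p ≤ 1) (u : ℝ) :
    (1 - p) * exp (-p * u) + p * exp ((1 - p) * u) ≤ exp (u ^ 2 / 8) := by
  set g : ℝ → ℝ := fun x => (1 - p) * exp (-p * x) + p * exp ((1 - p) * x) with hgdef
  set g' : ℝ → ℝ := fun x => p * (1 - p) * (exp ((1 - p) * x) - exp (-p * x)) with hg'def
  have hgpos : ∀ x, 0 < g x := by
    intro x
    rcases eq_or_lt_of_le hp0 with h | h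
    · simp only [hgdef, ← h]
      positivity
    · have h1 : 0 < p * exp ((1 - p) * x) := by positivity
      have h2 : 0 ≤ (1 - p) * exp (-p * x) := by
        apply mul_nonneg (by linarith) (exp_pos _).le
      simp only [hgdef]; linarith
  have hgd : ∀ x, HasDerivAt g (g' x) x := by
    intro x
    have h1 : HasDerivAt (fun y : ℝ => (1 - p) * exp (-p * y))
        ((1 - p) * (exp (-p * x) * (-p * 1))) x :=
      (((hasDerivAt_id x).const_mul (-p)).exp).const_mul (1 - p)
    have h2 : HasDerivAt (fun y : ℝ => p * exp ((1 - p) * y))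
        (p * (exp ((1 - p) * x) * ((1 - p) * 1))) x :=
      (((hasDerivAt_id x).const_mul (1 - p)).exp).const_mul p
    have := h1.add h2
    refine this.congr_deriv ?_
    simp only [hg'def]; ring
  have hg'd : ∀ x, HasDerivAt g'
      (p * (1 - p) * ((1 - p) * exp ((1 - p) * x) + p * exp (-p * x))) x := by
    intro x
    have h1 : HasDerivAt (fun y : ℝ => exp ((1 - p) * y))
        (exp ((1 - p) * x) * ((1 - p) * 1)) x :=
      (((hasDerivAt_id x).const_mul (1 - p)).exp)
    have h2 : HasDerivAt (fun y : ℝ => exp (-p * y))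
        (exp (-p * x) * (-p * 1)) x :=
      (((hasDerivAt_id x).const_mul (-p)).exp)
    have := (h1.sub h2).const_mul (p * (1 - p))
    refine this.congr_deriv ?_
    ring
  -- D = u^2/8 - log (g u), D' its derivative
  set D : ℝ → ℝ := fun x => x ^ 2 / 8 - log (g x) with hDdef
  set D' : ℝ → ℝ := fun x => x / 4 - g' x / g x with hD'def
  have hDd : ∀ x, HasDerivAt D (D' x) x := by
    intro x
    have h1 : HasDerivAt (fun y : ℝ => y ^ 2 / 8) (x / 4) x := by
      have := (hasDerivAt_pow 2 x).div_const 8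
      refine this.congr_deriv ?_
      ring
    have h2 : HasDerivAt (fun y : ℝ => log (g y)) (g' x / g x) x :=
      (hgd x).log (hgpos x).ne'
    exact h1.sub h2
  have hD'd : ∀ x, HasDerivAt D'
      (1 / 4 - (p * (1 - p) * ((1 - p) * exp ((1 - p) * x) + p * exp (-p * x)) * g x
        - g' x * g' x) / (g x) ^ 2) x := by
    intro x
    have h1 : HasDerivAt (fun y : ℝ => y / 4) (1 / 4) x := (hasDerivAt_id x).div_const 4
    have h2 := (hg'd x).div (hgd x) (hgpos x).ne'
    exact h1.sub h2
  have hD'nonneg : ∀ x, 0 ≤ 1 / 4 -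
      (p * (1 - p) * ((1 - p) * exp ((1 - p) * x) + p * exp (-p * x)) * g x
        - g' x * g' x) / (g x) ^ 2 := by
    intro x
    rw [sub_nonneg, div_le_iff₀ (pow_pos (hgpos x) 2)]
    have e1 := exp_pos (-p * x)
    have e2 := exp_pos ((1 - p) * x)
    have key : p * (1 - p) * ((1 - p) * exp ((1 - p) * x) + p * exp (-p * x)) * g x
        - g' x * g' x = (p * (1 - p)) * (exp (-p * x) * exp ((1 - p) * x)) := by
      simp only [hgdef, hg'def]; ring
    rw [key]
    nlinarith [sq_nonneg ((1 - p) * exp (-p * x) - p * exp ((1 - p) * x)),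
      mul_nonneg (mul_nonneg hp0 (by linarith : (0:ℝ) ≤ 1 - p))
        (mul_pos e1 e2).le]
  have hD'mono : Monotone D' :=
    monotone_of_deriv_nonneg (fun x => (hD'd x).differentiableAt)
      (fun x => by rw [(hD'd x).deriv]; exact hD'nonneg x)
  have hD'0 : D' 0 = 0 := by
    simp only [hD'def, hg'def]
    norm_num
  have hDdiff : Differentiable ℝ D := fun x => (hDd x).differentiableAt
  have hD0 : D 0 = 0 := by
    have : g 0 = 1 := by simp [hgdef]
    simp [hDdef, this]
  have hDnonneg : ∀ x, 0 ≤ D x := by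
    intro x
    rcases le_total 0 x with hx | hx
    · have hmono : MonotoneOn D (Set.Ici 0) := by
        apply monotoneOn_of_deriv_nonneg (convex_Ici 0) hDdiff.continuous.continuousOn
          hDdiff.differentiableOn
        intro y hy
        rw [(hDd y).deriv]
        rw [← hD'0]
        have hy' : (0:ℝ) < y := by simpa [interior_Ici] using hy
        exact hD'mono hy'.le
      have := hmono (Set.self_mem_Ici) (Set.mem_Ici.2 hx) hx
      linarith [hD0 ▸ this]
    · have hanti : AntitoneOn D (Set.Iic 0) := by
        apply antitoneOn_of_deriv_nonpos (convex_Iic 0) hDdiff.continuous.continuousOn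
          hDdiff.differentiableOn
        intro y hy
        rw [(hDd y).deriv]
        rw [← hD'0]
        have hy' : y < (0:ℝ) := by simpa [interior_Iic] using hy
        exact hD'mono hy'.le
      have := hanti (Set.mem_Iic.2 hx) (Set.self_mem_Iic) hx
      linarith [hD0 ▸ this]
    -- done
  have := hDnonneg u
  simp only [hDdef, sub_nonneg] at this
  calc g u = exp (log (g u)) := (exp_log (hgpos u)).symm
    _ ≤ exp (u ^ 2 / 8) := exp_le_exp.2 this

/-- Conditional Hoeffding lemma: if `a ≤ V ≤ b` a.s. and `E[V | m𝔽] = 0` a.s., then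
`E[exp (s V) | m𝔽] ≤ exp ((1/8)(b-a)² s²)` a.s. for every `s`. -/
theorem stmt12 {Ω : Type*} (m𝔽 : MeasurableSpace Ω) {m0 : MeasurableSpace Ω} (μ : Measure Ω)
    [IsProbabilityMeasure μ]
    (hle : m𝔽 ≤ m0)
    (V : Ω → ℝ) (hV : Measurable V) (a b : ℝ)
    (hbdd : ∀ᵐ ω ∂μ, a ≤ V ω ∧ V ω ≤ b)
    (hmean : μ[V | m𝔽] =ᵐ[μ] 0) (s : ℝ) :
    μ[fun ω => Real.exp (s * V ω) | m𝔽] ≤ᵐ[μ]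
      fun _ => Real.exp (1 / 8 * (b - a) ^ 2 * s ^ 2) := by
  have hrhs : (1:ℝ) ≤ Real.exp (1 / 8 * (b - a) ^ 2 * s ^ 2) := by
    rw [show (1:ℝ) = Real.exp 0 by simp]
    apply Real.exp_le_exp.2
    positivity
  -- integrability of V
  have hVm : Measurable[m0] V := hV
  have hVint : Integrable V μ := by
    have hbound : ∀ᵐ ω ∂μ, ‖V ω‖ ≤ max |a| |b| := by
      filter_upwards [hbdd] with ω ⟨h1, h2⟩
      rw [Real.norm_eq_abs]
      exact abs_le_max_abs_abs h1 h2
    exact Integrable.mono' (integrable_const (max |a| |b|)) (hVm.aestronglyMeasurable (μ := μ)) hbound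
  -- mean zero
  have hmean0 : ∫ ω, V ω ∂μ = 0 := by
    have h1 : ∫ ω, (μ[V | m𝔽]) ω ∂μ = ∫ ω, V ω ∂μ := integral_condExp hle
    have h2 : ∫ ω, (μ[V | m𝔽]) ω ∂μ = 0 := by
      rw [integral_congr_ae hmean]; simp
    linarith
  have hab : a ≤ 0 ∧ 0 ≤ b := by
    constructor
    · have : a = ∫ _, a ∂μ := by simp
      rw [this, ← hmean0]
      apply integral_mono_ae (integrable_const a) hVint
      filter_upwards [hbdd] with ω h using h.1
    · have : b = ∫ _, b ∂μ := by simp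
      rw [this, ← hmean0]
      apply integral_mono_ae hVint (integrable_const b)
      filter_upwards [hbdd] with ω h using h.2
  obtain ⟨ha0, hb0⟩ := hab
  rcases eq_or_lt_of_le (le_trans ha0 hb0) with hab | hab
  · -- degenerate case a = b = 0, V = 0 a.e.
    have ha : a = 0 := le_antisymm ha0 (hab ▸ hb0)
    have hb : b = 0 := hab ▸ ha
    have hV0 : (fun ω => Real.exp (s * V ω)) =ᵐ[μ] fun _ => (1:ℝ) := by
      filter_upwards [hbdd] with ω ⟨h1, h2⟩
      have : V ω = 0 := le_antisymm (hb ▸ h2) (ha ▸ h1)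
      simp [this]
    calc μ[fun ω => Real.exp (s * V ω) | m𝔽]
        =ᵐ[μ] μ[fun _ => (1:ℝ) | m𝔽] := condExp_congr_ae hV0
      _ =ᵐ[μ] fun _ => (1:ℝ) := by rw [condExp_const hle]
      _ ≤ᵐ[μ] fun _ => Real.exp (1 / 8 * (b - a) ^ 2 * s ^ 2) :=
          Filter.Eventually.of_forall fun ω => hrhs
  · -- main case a < b
    have hba : 0 < b - a := by linarith
    set p : ℝ := -a / (b - a) with hpdef
    have hp0 : 0 ≤ p := div_nonneg (by linarith) hba.le
    have hp1 : p ≤ 1 := by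
      rw [div_le_one hba]; linarith
    set c1 : ℝ := (1 - p) * Real.exp (s * a) + p * Real.exp (s * b) with hc1def
    set c2 : ℝ := (Real.exp (s * b) - Real.exp (s * a)) / (b - a) with hc2def
    -- pointwise convexity bound
    have hpt : ∀ᵐ ω ∂μ, Real.exp (s * V ω) ≤ c1 + c2 * V ω := by
      filter_upwards [hbdd] with ω ⟨h1, h2⟩
      set v := V ω
      set lam : ℝ := (b - v) / (b - a) with hlam
      have hlam0 : 0 ≤ lam := div_nonneg (by linarith) hba.le
      have hlam1 : 0 ≤ 1 - lam := by
        have : lam ≤ 1 := by rw [hlam, div_le_one hba]; linarith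
        linarith
      have hconv := convexOn_exp.2 (Set.mem_univ (s * a)) (Set.mem_univ (s * b))
        hlam0 hlam1 (by ring)
      have heq : lam • (s * a) + (1 - lam) • (s * b) = s * v := by
        simp only [smul_eq_mul, hlam]
        field_simp
        ring
      rw [heq] at hconv
      have heq2 : lam • Real.exp (s * a) + (1 - lam) • Real.exp (s * b)
          = c1 + c2 * v := by
        simp only [smul_eq_mul, hlam, hc1def, hc2def, hpdef]
        field_simp
        ring
      rw [heq2] at hconv
      exact hconv
    -- integrability of exp(sV)
    have hEint : Integrable (fun ω => Real.exp (s * V ω)) μ := by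
      have hbound : ∀ᵐ ω ∂μ, ‖Real.exp (s * V ω)‖ ≤ Real.exp (|s| * max |a| |b|) := by
        filter_upwards [hbdd] with ω ⟨h1, h2⟩
        rw [Real.norm_eq_abs, Real.abs_exp]
        apply Real.exp_le_exp.2
        calc s * V ω ≤ |s * V ω| := le_abs_self _
          _ = |s| * |V ω| := abs_mul _ _
          _ ≤ |s| * max |a| |b| :=
              mul_le_mul_of_nonneg_left (abs_le_max_abs_abs h1 h2) (abs_nonneg s)
      exact Integrable.mono' (integrable_const (Real.exp (|s| * max |a| |b|)))
        ((hVm.const_mul s).exp).aestronglyMeasurable (μ := μ) hbound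
    have hAint : Integrable (fun ω => c1 + c2 * V ω) μ :=
      (integrable_const c1).add (hVint.const_mul c2)
    -- condexp bound
    have hcond1 : μ[fun ω => Real.exp (s * V ω) | m𝔽] ≤ᵐ[μ] μ[fun ω => c1 + c2 * V ω | m𝔽] :=
      condExp_mono hEint hAint hpt
    have hcond2 : μ[fun ω => c1 + c2 * V ω | m𝔽] =ᵐ[μ] fun _ => c1 := by
      have heqf : (fun ω => c1 + c2 * V ω) = (fun _ => c1) + c2 • V := by
        funext ω; simp [Pi.add_apply]
      rw [heqf]
      calc μ[(fun _ => c1) + c2 • V | m𝔽]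
          =ᵐ[μ] μ[fun _ => c1 | m𝔽] + μ[c2 • V | m𝔽] :=
            condExp_add (integrable_const c1) (hVint.smul c2) m𝔽
        _ =ᵐ[μ] (fun _ => c1) + c2 • μ[V | m𝔽] := by
            rw [condExp_const hle]
            exact Filter.EventuallyEq.add (Filter.EventuallyEq.refl _ _)
              (condExp_smul c2 V m𝔽)
        _ =ᵐ[μ] fun _ => c1 := by
            filter_upwards [hmean] with ω hω
            simp [hω]
    -- the constant bound
    have hc1le : c1 ≤ Real.exp (1 / 8 * (b - a) ^ 2 * s ^ 2) := by
      have key := hoeffding_aux hp0 hp1 (s * (b - a))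
      have e1 : -p * (s * (b - a)) = s * a := by
        rw [hpdef]; field_simp
      have e2 : (1 - p) * (s * (b - a)) = s * b := by
        rw [hpdef]; field_simp; ring
      have e3 : (s * (b - a)) ^ 2 / 8 = 1 / 8 * (b - a) ^ 2 * s ^ 2 := by ring
      rw [e1, e2, e3] at key
      exact key
    calc μ[fun ω => Real.exp (s * V ω) | m𝔽]
        ≤ᵐ[μ] μ[fun ω => c1 + c2 * V ω | m𝔽] := hcond1
      _ ≤ᵐ[μ] fun _ => Real.exp (1 / 8 * (b - a) ^ 2 * s ^ 2) := by
          filter_upwards [hcond2] with ω hω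
          rw [hω]
          exact hc1le
end
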